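/- arXiv:2511.10548 — 3 statements merged into one kernel-verified Lean document; each statement's English description precedes it below -/
import Mathlib

section
/- Let a_1 < a_2 < ... < a_p be positive integers and e_1, ..., e_p be positive integers. The Young diagram Y(a;e) is wide if and only if for all 1 \le j \le k \le p one has sr_{j,k} \ge sc_{j,k}, i.e., the sum of the lengths of the top a_j rows of the tail subdiagram Y_k is at least the sum of the lengths of its leftmost a_j columns. -/
/-- The multiset of row lengths of the Young diagram `Y(a;e)`:
`e i` rows of length `a i` for `i = 1, ..., p`. -/
def rowMultiset (p : ℕ) (a e : ℕ → ℕ) : Multiset ℕ :=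
  ∑ i ∈ Finset.Icc 1 p, Multiset.replicate (e i) (a i)

/-- The sum of the `w` largest elements of the multiset `S`
(the sum of all of `S` if `S` has at most `w` elements). -/
def topSum (S : Multiset ℕ) (w : ℕ) : ℕ :=
  ((Multiset.sort S (· ≤ ·)).reverse.take w).sum

/-- The sum of the lengths of the leftmost `w` columns of the Young diagram
whose multiset of row lengths is `S`. -/
def colSum (S : Multiset ℕ) (w : ℕ) : ℕ :=
  ∑ c ∈ Finset.Icc 1 w, (S.filter (fun r => c ≤ r)).card

/-- A Young diagram with multiset of row lengths `R` is wide if every subdiagram formed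
by a subset of the rows dominates its conjugate. -/
def Wide (R : Multiset ℕ) : Prop :=
  ∀ S : Multiset ℕ, S ≤ R → ∀ w : ℕ, 0 < w → colSum S w ≤ topSum S w

/-- A Young diagram with multiset of row lengths `R` is Latin if, listing its row lengths
as `l 1, ..., l m`, there is a filling `f` of its cells such that row `i` is filled by a
permutation of `1, ..., l i` and the entries in each column are pairwise distinct. -/
def IsLatin (R : Multiset ℕ) : Prop :=
  ∃ (m : ℕ) (l : ℕ → ℕ) (f : ℕ → ℕ → ℕ),
    (Finset.Icc 1 m).val.map l = R ∧
    (∀ i ∈ Finset.Icc 1 m,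
      Set.InjOn (f i) (Set.Icc 1 (l i)) ∧
      (Finset.Icc 1 (l i)).image (f i) = Finset.Icc 1 (l i)) ∧
    (∀ j, 1 ≤ j → ∀ i₁ ∈ Finset.Icc 1 m, ∀ i₂ ∈ Finset.Icc 1 m,
      j ≤ l i₁ → j ≤ l i₂ → f i₁ j = f i₂ j → i₁ = i₂)

/-- An allocation for the Young diagram `Y(a;e)` with `p` row blocks (where `a 0 = 0`
and `b i = a i - a (i-1)`). -/
def HasAllocation (p : ℕ) (a e : ℕ → ℕ) : Prop :=
  ∃ z : ℕ → ℕ → ℕ → ℕ,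
    (∀ i j, 1 ≤ j → j ≤ i → i ≤ p →
      ∑ k ∈ Finset.Icc 1 i, z i j k = e i * (a j - a (j - 1))) ∧
    (∀ i k, 1 ≤ k → k ≤ i → i ≤ p →
      ∑ j ∈ Finset.Icc 1 i, z i j k = e i * (a k - a (k - 1))) ∧
    (∀ j k, 1 ≤ j → j ≤ p → 1 ≤ k → k ≤ p →
      ∑ i ∈ Finset.Icc (max j k) p, z i j k ≤ (a j - a (j - 1)) * (a k - a (k - 1)))

/-- `sc a e j k`: the sum of the lengths of the leftmost `a j` columns of the tail
subdiagram `Y_k`. -/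
def sc (a e : ℕ → ℕ) (j k : ℕ) : ℕ :=
  ∑ i ∈ Finset.Icc 1 k, e i * min (a i) (a j)

/-- `sr a e j k`: the sum of the lengths of the top `a j` rows of the tail
subdiagram `Y_k`. -/
def sr (a e : ℕ → ℕ) (j k : ℕ) : ℕ :=
  topSum (rowMultiset k a e) (a j)

/-- `se e m k = ∑_{t=m}^{k} e t`. -/
def se (e : ℕ → ℕ) (m k : ℕ) : ℕ :=
  ∑ t ∈ Finset.Icc m k, e t

/-! The sum of the `w` longest rows of `S` is `min_x (w * x + ∑_{s ∈ S} (s - x))`, and the sum of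
the leftmost `w` columns is `∑_{s ∈ S} min s w`. So `S` fails domination at `w` iff some threshold
`x` makes `∑_{s ∈ S} (min s w - (s - x)) - w * x` positive. Rows of length `≥ w + x` only lower this
quantity and shorter rows only raise it, so the worst subdiagram is the tail of rows of length
`< w + x`. For a fixed tail and `x` the quantity is piecewise affine in `w`, with breakpoints at the
row lengths and slope `-x` past the longest row, so it suffices to take `w` a row length of the
tail: these are the conditions `sc ≤ sr`. -/

lemma colSum_zero_right (S : Multiset ℕ) : colSum S 0 = 0 := by
  simp [colSum]

lemma colSum_eq_sum_min (S : Multiset ℕ) (w : ℕ) : colSum S w = (S.map (min · w)).sum := by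
  induction S using Multiset.induction_on with
  | empty => simp [colSum]
  | cons r S ih =>
    have hrow : ∑ c ∈ Finset.Icc 1 w, (if c ≤ r then 1 else 0) = min r w := by
      have : (Finset.Icc 1 w).filter (· ≤ r) = Finset.Icc 1 (min r w) := by
        ext c
        simp only [Finset.mem_filter, Finset.mem_Icc]
        omega
      simp [Finset.sum_boole, this]
    simp only [colSum, Multiset.filter_cons, Multiset.card_add, Finset.sum_add_distrib] at ih ⊢
    simp [apply_ite Multiset.card, hrow, ih]

def topSumBound (S : Multiset ℕ) (w x : ℕ) : ℕ :=
  w * x + (S.map (· - x)).sum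

lemma sum_map_add_tsub (T : Multiset ℕ) (x : ℕ) :
    (T.map fun t => x + (t - x)).sum = Multiset.card T * x + (T.map (· - x)).sum := by
  simp [Multiset.sum_map_add]

lemma exists_add_eq_topSum (S : Multiset ℕ) (w : ℕ) :
    ∃ T U : Multiset ℕ, T + U = S ∧ T.sum = topSum S w ∧ Multiset.card T ≤ w ∧
      (Multiset.card T = w ∨ U = 0) ∧ ∀ t ∈ T, ∀ u ∈ U, u ≤ t := by
  set l := (S.sort (· ≤ ·)).reverse
  have hsorted : (l.take w ++ l.drop w).Pairwise (· ≥ ·) := by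
    rw [List.take_append_drop, List.pairwise_reverse]
    exact S.pairwise_sort _
  refine ⟨l.take w, l.drop w, ?_, rfl, by simp, ?_, fun t ht u hu => ?_⟩
  · rw [Multiset.coe_add, List.take_append_drop, Multiset.coe_reverse, Multiset.sort_eq]
  · by_cases hw : w ≤ l.length
    · simp [hw]
    · simp [List.drop_eq_nil_of_le (not_le.1 hw).le]
  · exact (List.pairwise_append.1 hsorted).2.2 t ht u hu

lemma topSum_le_topSumBound (S : Multiset ℕ) (w x : ℕ) : topSum S w ≤ topSumBound S w x := by
  obtain ⟨T, U, rfl, hT, hcard, -, -⟩ := exists_add_eq_topSum S w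
  calc topSum (T + U) w = T.sum := hT.symm
    _ ≤ (T.map fun t => x + (t - x)).sum := by
      simpa using Multiset.sum_map_le_sum_map id _ fun t _ => (le_add_tsub : t ≤ x + (t - x))
    _ ≤ topSumBound (T + U) w x := by
      rw [sum_map_add_tsub, topSumBound, Multiset.map_add, Multiset.sum_add]
      gcongr
      exact le_self_add

/-- Attained at the threshold `x` = the largest row length outside the top `w` rows. -/
lemma exists_topSumBound_eq_topSum (S : Multiset ℕ) (w : ℕ) :
    ∃ x, topSumBound S w x = topSum S w := by
  obtain ⟨T, U, rfl, hT, -, hcard, hTU⟩ := exists_add_eq_topSum S w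
  refine ⟨U.sup, ?_⟩
  have hU : (U.map (· - U.sup)).sum = 0 :=
    Multiset.sum_eq_zero fun _ h => by
      obtain ⟨u, hu, rfl⟩ := Multiset.mem_map.1 h
      exact Nat.sub_eq_zero_of_le (Multiset.le_sup hu)
  have hwx : w * U.sup = Multiset.card T * U.sup := by
    rcases hcard with h | rfl
    · rw [h]
    · simp
  rw [← hT, topSumBound, Multiset.map_add, Multiset.sum_add, hU, add_zero, hwx,
    ← sum_map_add_tsub]
  conv_rhs => rw [← Multiset.map_id T]
  exact congrArg Multiset.sum <| Multiset.map_congr rfl fun t ht =>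
    add_tsub_cancel_of_le (Multiset.sup_le.2 fun u hu => hTU t ht u hu)

lemma le_topSum_iff {S : Multiset ℕ} {w n : ℕ} : n ≤ topSum S w ↔ ∀ x, n ≤ topSumBound S w x := by
  refine ⟨fun h x => h.trans (topSum_le_topSumBound S w x), fun h => ?_⟩
  obtain ⟨x, hx⟩ := exists_topSumBound_eq_topSum S w
  exact hx ▸ h x

def boundGap (S : Multiset ℕ) (w x : ℕ) : ℤ :=
  colSum S w - topSumBound S w x

lemma colSum_le_topSum_iff {S : Multiset ℕ} {w : ℕ} :
    colSum S w ≤ topSum S w ↔ ∀ x, boundGap S w x ≤ 0 := by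
  simp only [le_topSum_iff, boundGap, sub_nonpos, Nat.cast_le]

lemma boundGap_eq_sum (S : Multiset ℕ) (w x : ℕ) :
    boundGap S w x = (S.map fun s : ℕ => min (s : ℤ) w - ((s - x : ℕ) : ℤ)).sum - w * x := by
  rw [boundGap, colSum_eq_sum_min, topSumBound, Multiset.sum_map_sub]
  push_cast [Multiset.map_map, Function.comp_def]
  ring

lemma boundGap_zero_right_nonpos (S : Multiset ℕ) (x : ℕ) : boundGap S 0 x ≤ 0 := by
  simp [boundGap, colSum_zero_right]

/-- A row of length `s ≥ w + x` contributes `min s w - (s - x) ≤ 0`. -/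
lemma boundGap_le_filter_lt (S : Multiset ℕ) (w x : ℕ) :
    boundGap S w x ≤ boundGap (S.filter (· < w + x)) w x := by
  rw [boundGap_eq_sum, boundGap_eq_sum, sub_le_sub_iff_right]
  conv_lhs => rw [← Multiset.filter_add_not (· < w + x) S]
  rw [Multiset.map_add, Multiset.sum_add, add_le_iff_nonpos_right]
  refine (Multiset.sum_map_le_sum_map _ (fun _ => 0) fun s hs => ?_).trans_eq (by simp)
  have := (Multiset.mem_filter.1 hs).2
  omega

lemma boundGap_mono {S T : Multiset ℕ} {w x : ℕ} (hST : S ≤ T) (hT : ∀ t ∈ T, t < w + x) :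
    boundGap S w x ≤ boundGap T w x := by
  obtain ⟨U, rfl⟩ := Multiset.le_iff_exists_add.1 hST
  rw [boundGap_eq_sum, boundGap_eq_sum, Multiset.map_add, Multiset.sum_add, sub_le_sub_iff_right,
    le_add_iff_nonneg_right]
  refine Multiset.sum_nonneg fun _ h => ?_
  obtain ⟨u, hu, rfl⟩ := Multiset.mem_map.1 h
  have := hT u (Multiset.mem_add.2 (Or.inr hu))
  omega

lemma boundGap_interpolate {T : Multiset ℕ} {u v w : ℕ} (x : ℕ) (huw : u ≤ w) (hwv : w ≤ v)
    (hT : ∀ t ∈ T, t ≤ u ∨ v ≤ t) :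
    (v - u : ℤ) * boundGap T w x = (v - w) * boundGap T u x + (w - u) * boundGap T v x := by
  have hrow : ∀ t ∈ T, (v - u : ℤ) * (min (t : ℤ) w - ((t - x : ℕ) : ℤ)) =
      (v - w) * (min (t : ℤ) u - ((t - x : ℕ) : ℤ)) +
        (w - u) * (min (t : ℤ) v - ((t - x : ℕ) : ℤ)) := by
    intro t ht
    rcases hT t ht with h | h
    · rw [min_eq_left (by omega), min_eq_left (by omega), min_eq_left (by omega)]; ring
    · rw [min_eq_right (by omega), min_eq_right (by omega), min_eq_right (by omega)]; ring
  simp only [boundGap_eq_sum]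
  rw [mul_sub, mul_sub, mul_sub]
  simp only [← Multiset.sum_map_mul_left]
  rw [Multiset.map_congr rfl hrow, Multiset.sum_map_add]
  ring

lemma boundGap_le_of_forall_le {T : Multiset ℕ} {u w : ℕ} (x : ℕ) (huw : u ≤ w)
    (hT : ∀ t ∈ T, t ≤ u) : boundGap T w x ≤ boundGap T u x := by
  have hrow : ∀ t ∈ T, min (t : ℤ) w - ((t - x : ℕ) : ℤ) = min (t : ℤ) u - ((t - x : ℕ) : ℤ) := by
    intro t ht
    have := hT t ht
    rw [min_eq_left (by omega), min_eq_left (by omega)]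
  rw [boundGap_eq_sum, boundGap_eq_sum, Multiset.map_congr rfl hrow]
  gcongr

lemma boundGap_nonpos_of_forall_mem {T : Multiset ℕ} {x : ℕ} (h : ∀ r ∈ T, boundGap T r x ≤ 0)
    (w : ℕ) : boundGap T w x ≤ 0 := by
  set u := (T.filter (· ≤ w)).sup
  have huw : u ≤ w := Multiset.sup_le.2 fun s hs => (Multiset.mem_filter.1 hs).2
  have hu : boundGap T u x ≤ 0 := by
    rcases eq_or_ne (T.filter (· ≤ w)) 0 with h0 | h0
    · rw [show u = 0 by simp [u, h0]]
      exact boundGap_zero_right_nonpos T x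
    · obtain ⟨r, hr, hmax⟩ := Multiset.exists_max_image id h0
      rw [show u = r from le_antisymm (Multiset.sup_le.2 hmax) (Multiset.le_sup hr)]
      exact h r (Multiset.mem_of_mem_filter hr)
  have hsplit : ∀ s ∈ T, s ≤ u ∨ w < s := fun s hs =>
    (le_or_gt s w).imp_left fun hsw => Multiset.le_sup (Multiset.mem_filter.2 ⟨hs, hsw⟩)
  by_cases hbig : ∃ s ∈ T, w < s
  · classical
    set v := Nat.find hbig
    obtain ⟨hvT, hwv⟩ : v ∈ T ∧ w < v := Nat.find_spec hbig
    have hmin : ∀ s ∈ T, w < s → v ≤ s := fun s hs hws => Nat.find_min' hbig ⟨hs, hws⟩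
    have hlin := boundGap_interpolate x huw hwv.le fun s hs => (hsplit s hs).imp_right (hmin s hs)
    have hv := h v hvT
    have huv : (0 : ℤ) < v - u := by omega
    nlinarith [mul_nonpos_of_nonneg_of_nonpos (show (0 : ℤ) ≤ v - w by omega) hu,
      mul_nonpos_of_nonneg_of_nonpos (show (0 : ℤ) ≤ w - u by omega) hv]
  · simp only [not_exists, not_and, not_lt] at hbig
    exact (boundGap_le_of_forall_le x huw fun s hs =>
      (hsplit s hs).resolve_right (hbig s hs).not_gt).trans hu

lemma Wide.colSum_le_topSum {R S : Multiset ℕ} (hR : Wide R) (hS : S ≤ R) (w : ℕ) :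
    colSum S w ≤ topSum S w := by
  rcases Nat.eq_zero_or_pos w with rfl | hw
  · simp [colSum_zero_right]
  · exact hR S hS w hw

/-- The rows of `R` shorter than `w + x` form a tail `R.filter (· ≤ m)` with `m ∈ R`. -/
lemma boundGap_filter_lt_nonpos {R : Multiset ℕ}
    (h : ∀ r ∈ R, ∀ r' ∈ R, r' ≤ r → colSum (R.filter (· ≤ r)) r' ≤ topSum (R.filter (· ≤ r)) r')
    (w x : ℕ) : boundGap (R.filter (· < w + x)) w x ≤ 0 := by
  rcases eq_or_ne (R.filter (· < w + x)) 0 with h0 | h0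
  · simp [h0, boundGap, colSum, topSumBound]
    positivity
  obtain ⟨m, hm, hmax⟩ := Multiset.exists_max_image id h0
  obtain ⟨hmR, hmlt⟩ := Multiset.mem_filter.1 hm
  have htail : R.filter (· < w + x) = R.filter (· ≤ m) :=
    Multiset.filter_congr fun r hr => ⟨fun hlt => hmax r (Multiset.mem_filter.2 ⟨hr, hlt⟩),
      fun hle => hle.trans_lt hmlt⟩
  rw [htail]
  refine boundGap_nonpos_of_forall_mem (fun r hr => ?_) w
  obtain ⟨hrR, hrm⟩ := Multiset.mem_filter.1 hr
  exact colSum_le_topSum_iff.1 (h m hmR r hrR hrm) x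

theorem wide_iff_forall_colSum_filter_le_topSum (R : Multiset ℕ) :
    Wide R ↔
      ∀ r ∈ R, ∀ r' ∈ R, r' ≤ r → colSum (R.filter (· ≤ r)) r' ≤ topSum (R.filter (· ≤ r)) r' := by
  refine ⟨fun hR r _ r' _ _ => hR.colSum_le_topSum (Multiset.filter_le _ R) r',
    fun h S hS w _ => colSum_le_topSum_iff.2 fun x => ?_⟩
  calc boundGap S w x ≤ boundGap (S.filter (· < w + x)) w x := boundGap_le_filter_lt S w x
    _ ≤ boundGap (R.filter (· < w + x)) w x :=
      boundGap_mono (Multiset.filter_le_filter _ hS) fun t ht => (Multiset.mem_filter.1 ht).2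
    _ ≤ 0 := boundGap_filter_lt_nonpos h w x

lemma mem_rowMultiset {p : ℕ} {a e : ℕ → ℕ} {r : ℕ} :
    r ∈ rowMultiset p a e ↔ ∃ i ∈ Finset.Icc 1 p, e i ≠ 0 ∧ a i = r := by
  simp [rowMultiset, Multiset.mem_sum, Multiset.mem_replicate, eq_comm]

lemma sum_map_rowMultiset (k : ℕ) (a e f : ℕ → ℕ) :
    ((rowMultiset k a e).map f).sum = ∑ i ∈ Finset.Icc 1 k, e i * f (a i) := by
  rw [rowMultiset, ← Multiset.coe_mapAddMonoidHom, map_sum, Multiset.sum_sum]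
  simp

lemma sc_eq_colSum (a e : ℕ → ℕ) (j k : ℕ) : sc a e j k = colSum (rowMultiset k a e) (a j) := by
  rw [colSum_eq_sum_min, sum_map_rowMultiset, sc]

lemma filter_le_rowMultiset {p k : ℕ} {a : ℕ → ℕ} (e : ℕ → ℕ) (ha : StrictMonoOn a (Set.Icc 1 p))
    (hk : 1 ≤ k) (hkp : k ≤ p) : (rowMultiset p a e).filter (· ≤ a k) = rowMultiset k a e := by
  have hsplit : rowMultiset p a e =
      rowMultiset k a e + ∑ i ∈ Finset.Icc (k + 1) p, Multiset.replicate (e i) (a i) := by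
    rw [rowMultiset, rowMultiset, ← Finset.sum_union]
    · congr 1
      ext i
      simp only [Finset.mem_union, Finset.mem_Icc]
      omega
    · exact Finset.disjoint_left.2 fun i hi hi' => by simp at hi hi'; omega
  rw [hsplit, Multiset.filter_add, Multiset.filter_eq_self.2, Multiset.filter_eq_nil.2, add_zero]
  · intro r hr
    obtain ⟨i, hi, hr⟩ := Multiset.mem_sum.1 hr
    rw [Multiset.eq_of_mem_replicate hr, not_le]
    simp only [Finset.mem_Icc] at hi
    exact ha ⟨hk, hkp⟩ ⟨by omega, hi.2⟩ (by omega)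
  · intro r hr
    obtain ⟨i, hi, -, rfl⟩ := mem_rowMultiset.1 hr
    simp only [Finset.mem_Icc] at hi
    exact ha.monotoneOn ⟨hi.1, hi.2.trans hkp⟩ ⟨hk, hkp⟩ hi.2

theorem wide_iff_sr_ge_sc_general (p : ℕ) (a e : ℕ → ℕ)
    (hmono : ∀ i, 1 ≤ i → i < p → a i < a (i + 1)) :
    Wide (rowMultiset p a e) ↔
      ∀ j k, 1 ≤ j → j ≤ k → k ≤ p → sc a e j k ≤ sr a e j k := by
  have ha : StrictMonoOn a (Set.Icc 1 p) :=
    strictMonoOn_of_lt_add_one Set.ordConnected_Icc fun i _ hi hi' =>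
      hmono i hi.1 (by simpa using hi'.2)
  constructor
  · intro hW j k hj hjk hkp
    rw [sc_eq_colSum, sr, ← filter_le_rowMultiset e ha (hj.trans hjk) hkp]
    exact hW.colSum_le_topSum (Multiset.filter_le _ _) _
  · refine fun h => (wide_iff_forall_colSum_filter_le_topSum _).2 fun r hr r' hr' hr'r => ?_
    obtain ⟨k, hk, -, rfl⟩ := mem_rowMultiset.1 hr
    obtain ⟨j, hj, -, rfl⟩ := mem_rowMultiset.1 hr'
    rw [Finset.mem_Icc] at hj hk
    rw [filter_le_rowMultiset e ha hk.1 hk.2, ← sc_eq_colSum]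
    exact h j k hj.1 ((ha.le_iff_le ⟨hj.1, hj.2⟩ ⟨hk.1, hk.2⟩).1 hr'r) hk.2

/-- `Y(a;e)` is wide iff `sr j k ≥ sc j k` for all `1 ≤ j ≤ k ≤ p`. -/
theorem wide_iff_sr_ge_sc (p : ℕ) (hp : 1 ≤ p) (a e : ℕ → ℕ)
    (ha1 : 0 < a 1)
    (hmono : ∀ i, 1 ≤ i → i < p → a i < a (i + 1))
    (he : ∀ i, 1 ≤ i → i ≤ p → 0 < e i) :
    Wide (rowMultiset p a e) ↔
      ∀ j k, 1 ≤ j → j ≤ k → k ≤ p → sc a e j k ≤ sr a e j k :=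
  wide_iff_sr_ge_sc_general p a e hmono
end

section
/- Let a_1 < a_2 be positive integers and e_1, e_2 be positive integers, and set b_2 = a_2 - a_1. If the Young diagram with e_1 rows of length a_1 and e_2 rows of length a_2 is wide, then, as integers, max(0, e_2(a_1 - b_2), a_1(e_2 - b_2)) \le min(a_1 e_2, a_1(a_1 - e_1), a_1 e_2 - b_2(e_2 - b_2)); consequently there exists an integer x with max(0, e_2(a_1 - b_2), a_1(e_2 - b_2)) \le x \le min(a_1 e_2, a_1(a_1 - e_1), a_1 e_2 - b_2(e_2 - b_2)). -/
/-!
Wideness applied to the rows of length `a₁` with `w = a₁`, to the whole diagram with `w = 1`,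
and to the whole diagram with `w = a₁` gives `e₁ ≤ a₁`, `e₁ + e₂ ≤ a₁ + b₂` and
`a₁ (e₁ + e₂) ≤ a₁² + e₂ b₂`. Each of the nine inequalities "lower bound ≤ upper bound" is a
polynomial consequence of these three constraints and the nonnegativity of the parameters.
-/

lemma colSum_replicate (n a w : ℕ) : colSum (Multiset.replicate n a) w = n * min w a := by
  have hfilter (c : ℕ) : ((Multiset.replicate n a).filter (c ≤ ·)).card = if c ≤ a then n else 0 := by
    split_ifs with h
    · rw [Multiset.filter_eq_self.mpr fun r hr => (Multiset.eq_of_mem_replicate hr).symm ▸ h,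
        Multiset.card_replicate]
    · rw [Multiset.filter_eq_nil.mpr fun r hr => (Multiset.eq_of_mem_replicate hr).symm ▸ h,
        Multiset.card_zero]
  have hIcc : (Finset.Icc 1 w).filter (· ≤ a) = Finset.Icc 1 (min w a) := by
    ext c; simp only [Finset.mem_filter, Finset.mem_Icc]; omega
  rw [colSum, Finset.sum_congr rfl fun c _ => hfilter c, ← Finset.sum_filter, hIcc,
    Finset.sum_const, Nat.card_Icc, smul_eq_mul, Nat.add_sub_cancel, Nat.mul_comm]

lemma colSum_add (S T : Multiset ℕ) (w : ℕ) : colSum (S + T) w = colSum S w + colSum T w := by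
  simp [colSum, Multiset.filter_add, Finset.sum_add_distrib]

lemma sort_replicate_add_replicate {a₁ a₂ : ℕ} (h : a₁ ≤ a₂) (e₁ e₂ : ℕ) :
    Multiset.sort (Multiset.replicate e₁ a₁ + Multiset.replicate e₂ a₂) (· ≤ ·)
      = List.replicate e₁ a₁ ++ List.replicate e₂ a₂ := by
  have hsorted : (List.replicate e₁ a₁ ++ List.replicate e₂ a₂).Pairwise (· ≤ ·) := by
    refine List.pairwise_append.mpr ⟨?_, ?_, ?_⟩
    · exact List.pairwise_replicate.mpr (Or.inr le_rfl)
    · exact List.pairwise_replicate.mpr (Or.inr le_rfl)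
    · intro x hx y hy
      rw [List.eq_of_mem_replicate hx, List.eq_of_mem_replicate hy]; exact h
  refine List.Perm.eq_of_pairwise' (Multiset.pairwise_sort _ _) hsorted ?_
  rw [← Multiset.coe_eq_coe, Multiset.sort_eq, ← Multiset.coe_replicate, ← Multiset.coe_replicate,
    ← Multiset.coe_add]

lemma topSum_replicate_add_replicate {a₁ a₂ : ℕ} (h : a₁ ≤ a₂) (e₁ e₂ w : ℕ) :
    topSum (Multiset.replicate e₁ a₁ + Multiset.replicate e₂ a₂) w
      = min w e₂ * a₂ + min (w - e₂) e₁ * a₁ := by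
  rw [topSum, sort_replicate_add_replicate h, List.reverse_append, List.reverse_replicate,
    List.reverse_replicate, List.take_append, List.take_replicate, List.take_replicate,
    List.sum_append, List.sum_replicate, List.sum_replicate, List.length_replicate]
  simp [smul_eq_mul]

lemma topSum_replicate (e a w : ℕ) : topSum (Multiset.replicate e a) w = min w e * a := by
  simpa using topSum_replicate_add_replicate le_rfl e 0 w

namespace Wide

lemma le_of_replicate_le {R : Multiset ℕ} (hw : Wide R) {e a : ℕ}
    (hle : Multiset.replicate e a ≤ R) (ha : 0 < a) : e ≤ a := by
  have h := hw _ hle a ha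
  rw [colSum_replicate, topSum_replicate, min_self] at h
  have := Nat.le_of_mul_le_mul_right h ha
  omega

variable {a₁ a₂ e₁ e₂ : ℕ} (hw : Wide (Multiset.replicate e₁ a₁ + Multiset.replicate e₂ a₂))
include hw

lemma add_le_of_replicate_add_replicate (ha1 : 0 < a₁) (hle : a₁ ≤ a₂) : e₁ + e₂ ≤ a₂ := by
  have h := hw _ le_rfl 1 one_pos
  rw [colSum_add, colSum_replicate, colSum_replicate, topSum_replicate_add_replicate hle,
    min_eq_left (by omega : 1 ≤ a₁), min_eq_left (by omega : 1 ≤ a₂)] at h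
  rcases Nat.eq_zero_or_pos e₂ with rfl | he2
  · have : min 1 e₁ * a₁ ≤ a₁ := mul_le_of_le_one_left a₁.zero_le (min_le_left _ _)
    simp only [mul_one, Nat.sub_zero, Nat.min_zero, zero_mul, add_zero] at h
    omega
  · rw [min_eq_left he2, Nat.sub_eq_zero_of_le he2] at h
    simpa using h

lemma mul_add_le_of_replicate_add_replicate (ha1 : 0 < a₁) (hle : a₁ ≤ a₂) :
    a₁ * (e₁ + e₂) ≤ a₁ * a₁ + e₂ * (a₂ - a₁) := by
  have h := hw _ le_rfl a₁ ha1
  rw [colSum_add, colSum_replicate, colSum_replicate, topSum_replicate_add_replicate hle,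
    min_self, min_eq_left hle] at h
  set m₂ := min a₁ e₂
  set m₁ := min (a₁ - e₂) e₁
  -- the top `a₁` rows: `m₂ ≤ e₂` of length `a₂` and `m₁` of length `a₁`, with `m₂ + m₁ ≤ a₁`
  have hm : m₂ + m₁ ≤ a₁ := by omega
  have hm₂ : m₂ ≤ e₂ := min_le_right _ _
  calc a₁ * (e₁ + e₂) = e₁ * a₁ + e₂ * a₁ := by ring
    _ ≤ m₂ * a₂ + m₁ * a₁ := h
    _ = (m₂ + m₁) * a₁ + m₂ * (a₂ - a₁) := by
      rw [← Nat.add_sub_cancel' hle]; simp only [Nat.add_sub_cancel_left]; ring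
    _ ≤ a₁ * a₁ + e₂ * (a₂ - a₁) := by gcongr

end Wide

lemma Ix_bounds {a₁ e₁ e₂ b₂ : ℤ} (ha1 : 0 ≤ a₁) (he1 : 0 ≤ e₁) (he2 : 0 ≤ e₂) (hb2 : 0 ≤ b₂)
    (h₁ : e₁ ≤ a₁) (h₂ : e₁ + e₂ ≤ a₁ + b₂) (h₃ : a₁ * (e₁ + e₂) ≤ a₁ * a₁ + e₂ * b₂) :
    max 0 (max (e₂ * (a₁ - b₂)) (a₁ * (e₂ - b₂))) ≤
      min (a₁ * e₂) (min (a₁ * (a₁ - e₁)) (a₁ * e₂ - b₂ * (e₂ - b₂))) := by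
  simp only [le_min_iff, max_le_iff]
  refine ⟨⟨?_, ?_, ?_⟩, ⟨?_, ?_, ?_⟩, ⟨?_, ?_, ?_⟩⟩
  · positivity
  · nlinarith [mul_nonneg he2 hb2]
  · nlinarith [mul_nonneg ha1 hb2]
  · nlinarith [mul_nonneg ha1 (sub_nonneg.mpr h₁)]
  · nlinarith
  · nlinarith [mul_nonneg ha1 (by linarith : 0 ≤ a₁ + b₂ - e₁ - e₂)]
  -- `a₁ e₂ - b₂ (e₂ - b₂) ≥ e₂ (e₂ - b₂) - b₂ (e₂ - b₂) = (e₂ - b₂)²` since `a₁ ≥ e₂ - b₂`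
  · nlinarith [mul_nonneg he2 (by linarith : 0 ≤ a₁ + b₂ - e₂), sq_nonneg (e₂ - b₂)]
  · nlinarith [sq_nonneg b₂]
  · nlinarith [mul_nonneg hb2 (by linarith : 0 ≤ a₁ + b₂ - e₂)]

theorem Ix_nonempty_general (a₁ a₂ e₁ e₂ : ℕ)
    (ha1 : 0 < a₁) (ha12 : a₁ < a₂)
    (b₂ : ℤ) (hb2 : b₂ = (a₂ : ℤ) - (a₁ : ℤ))
    (hw : Wide (Multiset.replicate e₁ a₁ + Multiset.replicate e₂ a₂)) :
    max 0 (max ((e₂ : ℤ) * ((a₁ : ℤ) - b₂)) ((a₁ : ℤ) * ((e₂ : ℤ) - b₂))) ≤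
        min ((a₁ : ℤ) * (e₂ : ℤ))
          (min ((a₁ : ℤ) * ((a₁ : ℤ) - (e₁ : ℤ)))
            ((a₁ : ℤ) * (e₂ : ℤ) - b₂ * ((e₂ : ℤ) - b₂))) ∧
      ∃ x : ℤ,
        max 0 (max ((e₂ : ℤ) * ((a₁ : ℤ) - b₂)) ((a₁ : ℤ) * ((e₂ : ℤ) - b₂))) ≤ x ∧
        x ≤ min ((a₁ : ℤ) * (e₂ : ℤ))
          (min ((a₁ : ℤ) * ((a₁ : ℤ) - (e₁ : ℤ)))
            ((a₁ : ℤ) * (e₂ : ℤ) - b₂ * ((e₂ : ℤ) - b₂))) := by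
  have hle : a₁ ≤ a₂ := ha12.le
  have h₁ : e₁ ≤ a₁ := hw.le_of_replicate_le (Multiset.le_add_right _ _) ha1
  have h₂ : e₁ + e₂ ≤ a₂ := hw.add_le_of_replicate_add_replicate ha1 hle
  have h₃ := hw.mul_add_le_of_replicate_add_replicate ha1 hle
  zify [hle] at h₁ h₂ h₃
  rw [← hb2] at h₃
  have bounds := Ix_bounds (Nat.cast_nonneg a₁) (Nat.cast_nonneg e₁) (Nat.cast_nonneg e₂)
    (by omega) h₁ (by omega) h₃
  exact ⟨bounds, _, le_rfl, bounds⟩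

/-- for a wide Young diagram with two distinct row lengths, the interval
`I_x` of admissible values for `x = z_{211}` is nonempty (all computed in `ℤ`). -/
theorem Ix_nonempty (a₁ a₂ e₁ e₂ : ℕ)
    (ha1 : 0 < a₁) (ha12 : a₁ < a₂) (he1 : 0 < e₁) (he2 : 0 < e₂)
    (b₂ : ℤ) (hb2 : b₂ = (a₂ : ℤ) - (a₁ : ℤ))
    (hw : Wide (Multiset.replicate e₁ a₁ + Multiset.replicate e₂ a₂)) :
    max 0 (max ((e₂ : ℤ) * ((a₁ : ℤ) - b₂)) ((a₁ : ℤ) * ((e₂ : ℤ) - b₂))) ≤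
        min ((a₁ : ℤ) * (e₂ : ℤ))
          (min ((a₁ : ℤ) * ((a₁ : ℤ) - (e₁ : ℤ)))
            ((a₁ : ℤ) * (e₂ : ℤ) - b₂ * ((e₂ : ℤ) - b₂))) ∧
      ∃ x : ℤ,
        max 0 (max ((e₂ : ℤ) * ((a₁ : ℤ) - b₂)) ((a₁ : ℤ) * ((e₂ : ℤ) - b₂))) ≤ x ∧
        x ≤ min ((a₁ : ℤ) * (e₂ : ℤ))
          (min ((a₁ : ℤ) * ((a₁ : ℤ) - (e₁ : ℤ)))
            ((a₁ : ℤ) * (e₂ : ℤ) - b₂ * ((e₂ : ℤ) - b₂))) :=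
  Ix_nonempty_general a₁ a₂ e₁ e₂ ha1 ha12 b₂ hb2 hw
end

section
/- Let a_1 < a_2 be positive integers and let e_1, e_2 be positive integers. If the Young diagram Y(a;e) with e_1 rows of length a_1 and e_2 rows of length a_2 is wide, then Y(a;e) is Latin. -/
/-!
Write the diagram as `s` short rows of length `k` and `t` long rows of length `k + d`, and
split every long row into a left block of `k` cells and a right block of `d` cells. Once the
symbol set `L i` of the right block of each long row is chosen, the right blocks form a
`t × d` array and the left blocks together with the short rows a `(t + s) × k` array, each row
with a prescribed symbol set; by König's edge-colouring theorem (a consequence of Hall's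
theorem) both can be filled without repetition in a column as soon as every symbol lies in at
most `d`, resp. `k`, of the prescribed sets. These two degree bounds only constrain how often
each symbol occurs among the `L i`, and suitable multiplicities exist because
`s ≤ k`, `s + t ≤ k + d` and `k (s + t) ≤ k² + min k t · d`; these are the wideness
inequalities for the short rows with `w = 1` and for the whole diagram with `w = 1`, `w = k`.
-/

open Finset

theorem card_le_card_biUnion_of_weights {κ β : Type*} [DecidableEq β] {T : κ → Finset β}
    (μ : κ → β → ℕ) {w : ℕ} (hw : 0 < w) (hrow : ∀ x, ∑ b ∈ T x, μ x b = w)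
    (hcol : ∀ b (s : Finset κ), ∑ x ∈ s, μ x b ≤ w) (s : Finset κ) :
    #s ≤ #(s.biUnion T) := by
  refine Nat.le_of_mul_le_mul_left ?_ hw
  calc w * #s = ∑ x ∈ s, ∑ b ∈ T x, μ x b := by simp [hrow, mul_comm]
    _ ≤ ∑ x ∈ s, ∑ b ∈ s.biUnion T, μ x b :=
      sum_le_sum fun x hx => sum_le_sum_of_subset (subset_biUnion_of_mem T hx)
    _ = ∑ b ∈ s.biUnion T, ∑ x ∈ s, μ x b := sum_comm
    _ ≤ w * #(s.biUnion T) := by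
      simpa [mul_comm] using sum_le_sum fun b (_ : b ∈ s.biUnion T) => hcol b s

theorem exists_le_le_sum_eq {α : Type*} {s : Finset α} {lo hi : α → ℕ} {T : ℕ}
    (hlohi : ∀ a ∈ s, lo a ≤ hi a) (hlo : ∑ a ∈ s, lo a ≤ T) (hhi : T ≤ ∑ a ∈ s, hi a) :
    ∃ c : α → ℕ, (∀ a ∈ s, lo a ≤ c a ∧ c a ≤ hi a) ∧ ∑ a ∈ s, c a = T := by
  classical
  induction s using Finset.induction_on generalizing T with
  | empty => exact ⟨0, by simp, by simp_all⟩
  | insert a s ha ih =>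
    rw [sum_insert ha] at hlo hhi
    have hlo_a := hlohi a (mem_insert_self a s)
    have hlohi_s : ∑ b ∈ s, lo b ≤ ∑ b ∈ s, hi b :=
      sum_le_sum fun b hb => hlohi b (mem_insert_of_mem hb)
    obtain ⟨x, hx⟩ : ∃ x, x = min (hi a) (T - ∑ b ∈ s, lo b) := ⟨_, rfl⟩
    obtain ⟨c, hc, hsum⟩ := ih (fun b hb => hlohi b (mem_insert_of_mem hb)) (T := T - x)
      (by omega) (by omega)
    refine ⟨Function.update c a x, fun b hb => ?_, ?_⟩
    · rcases mem_insert.1 hb with rfl | hb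
      · simp only [Function.update_self]
        omega
      · rw [Function.update_of_ne (ne_of_mem_of_not_mem hb ha)]
        exact hc b hb
    · rw [sum_insert ha, Function.update_self, sum_update_of_notMem ha, hsum]
      omega

theorem exists_subset_card_eq_of_sum_eq {α : Type*} {U : Finset α} {c : α → ℕ} {t d : ℕ}
    (ht : 0 < t) (hc : ∀ a ∈ U, c a ≤ t) (hsum : ∑ a ∈ U, c a = t * d) :
    ∃ S ⊆ U, #S = d ∧ (∀ a ∈ S, 0 < c a) ∧ ∀ a ∈ U, c a = t → a ∈ S := by
  have hfull : #{a ∈ U | c a = t} ≤ d := by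
    refine Nat.le_of_mul_le_mul_left ?_ ht
    calc t * #{a ∈ U | c a = t} = ∑ a ∈ U with c a = t, c a := by
          rw [sum_congr rfl fun a ha => (mem_filter.1 ha).2, sum_const, smul_eq_mul, mul_comm]
      _ ≤ ∑ a ∈ U, c a := sum_le_sum_of_subset (filter_subset _ _)
      _ = t * d := hsum
  have hpos : d ≤ #{a ∈ U | 0 < c a} := by
    refine Nat.le_of_mul_le_mul_left ?_ ht
    calc t * d = ∑ a ∈ U with 0 < c a, c a := by
          rw [← hsum, sum_filter_of_ne fun a _ h => Nat.pos_of_ne_zero h]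
      _ ≤ ∑ a ∈ U with 0 < c a, t := sum_le_sum fun a ha => hc a (mem_filter.1 ha).1
      _ = t * #{a ∈ U | 0 < c a} := by rw [sum_const, smul_eq_mul, mul_comm]
  obtain ⟨S, hfullS, hSpos, hScard⟩ := exists_subsuperset_card_eq
    (monotone_filter_right _ fun a h => by omega) hfull hpos
  exact ⟨S, hSpos.trans (filter_subset _ _), hScard, fun a ha => (mem_filter.1 (hSpos ha)).2,
    fun a ha hca => hfullS (mem_filter.2 ⟨ha, hca⟩)⟩

section Family

variable {ι α : Type*} [Fintype ι] [DecidableEq α]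

def familyDegree (V : ι → Finset α) (a : α) : ℕ := #{i | a ∈ V i}

theorem familyDegree_eq_sum (V : ι → Finset α) (a : α) :
    familyDegree V a = ∑ i, if a ∈ V i then 1 else 0 :=
  card_filter _ _

/-- Two mirrored copies of the incidence graph of `V`, from `ι ⊕ α` to `α ⊕ ι`, in which every
symbol of degree below `w` is also joined to its own copy. -/
def doubledNeighbors (V : ι → Finset α) (w : ℕ) : ι ⊕ α → Finset (α ⊕ ι)
  | .inl i => (V i).disjSum ∅
  | .inr a => ({b ∈ {a} | familyDegree V b < w} : Finset α).disjSum {i | a ∈ V i}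

/-- Giving the edge from a symbol to its own copy the weight `w - familyDegree V a` makes the
doubled graph `w`-regular, so Hall's condition holds. -/
theorem exists_injective_mem_doubledNeighbors {V : ι → Finset α} {w : ℕ} (hw : 0 < w)
    (hcard : ∀ i, #(V i) = w) (hdeg : ∀ a, familyDegree V a ≤ w) :
    ∃ F : ι ⊕ α → α ⊕ ι, Function.Injective F ∧ ∀ x, F x ∈ doubledNeighbors V w x := by
  classical
  let μ : ι ⊕ α → α ⊕ ι → ℕ
    | .inl i, .inl c => if c ∈ V i then 1 else 0
    | .inl _, .inr _ => 0
    | .inr a, .inl c => if c = a then w - familyDegree V a else 0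
    | .inr a, .inr i => if a ∈ V i then 1 else 0
  have hrow : ∀ x, ∑ b ∈ doubledNeighbors V w x, μ x b = w := by
    rintro (i | a)
    · simp [doubledNeighbors, μ, hcard]
    · have := hdeg a
      have hcopies : ∑ i ∈ {i | a ∈ V i}, μ (.inr a) (.inr i) = familyDegree V a :=
        (sum_congr rfl fun i hi => if_pos (mem_filter.1 hi).2).trans (card_eq_sum_ones _).symm
      simp only [doubledNeighbors, sum_disjSum, hcopies, sum_filter, sum_singleton]
      simp only [μ, if_true]
      split_ifs <;> omega
  have hcol : ∀ b (s : Finset (ι ⊕ α)), ∑ x ∈ s, μ x b ≤ w := by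
    rintro (c | i) s <;> rw [sum_sum_eq_sum_toLeft_add_sum_toRight]
    · calc _ ≤ familyDegree V c + (w - familyDegree V c) := by
            gcongr
            · rw [familyDegree_eq_sum]
              exact sum_le_sum_of_subset (subset_univ _)
            · simp only [μ]
              rw [sum_ite_eq]
              split_ifs <;> simp
        _ = w := by have := hdeg c; omega
    · simp only [μ, sum_const_zero, zero_add, sum_boole, Nat.cast_id, ← hcard i]
      exact card_le_card (fun x hx => (mem_filter.1 hx).2)
  exact (all_card_le_biUnion_card_iff_exists_injective _).mp
    (card_le_card_biUnion_of_weights μ hw hrow hcol)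

theorem exists_injective_mem_of_familyDegree_le {V : ι → Finset α} {w : ℕ} (hw : 0 < w)
    (hcard : ∀ i, #(V i) = w) (hdeg : ∀ a, familyDegree V a ≤ w) :
    ∃ f : ι → α, Function.Injective f ∧ (∀ i, f i ∈ V i) ∧
      ∀ a, familyDegree V a = w → a ∈ Set.range f := by
  classical
  obtain ⟨F, hFinj, hFT⟩ := exists_injective_mem_doubledNeighbors hw hcard hdeg
  have hleft : ∀ i, ∃ a ∈ V i, F (.inl i) = .inl a := fun i => by
    simpa [doubledNeighbors, mem_disjSum, eq_comm] using hFT (.inl i)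
  choose f hfV hfF using hleft
  refine ⟨f, fun i j hij => Sum.inl_injective (hFinj (by rw [hfF, hfF, hij])), hfV, ?_⟩
  intro a ha
  set U := univ.biUnion V
  -- `F` maps the finite set `ι ⊕ U` injectively into `U ⊕ ι`, which has the same size.
  have hsurj : ((univ : Finset ι).disjSum U).image F = U.disjSum univ := by
    refine eq_of_subset_of_card_le ?_ ?_
    · rintro _ hy
      obtain ⟨x | b, hx, rfl⟩ := mem_image.1 hy
      · rw [hfF]
        exact inl_mem_disjSum.2 (mem_biUnion.2 ⟨x, mem_univ _, hfV x⟩)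
      · have hb := hFT (.inr b)
        rcases hFb : F (.inr b) with c | i
        · rw [hFb] at hb
          simp only [doubledNeighbors, inl_mem_disjSum, mem_filter, mem_singleton] at hb
          rw [inl_mem_disjSum, hb.1]
          exact inr_mem_disjSum.1 hx
        · exact inr_mem_disjSum.2 (mem_univ i)
    · rw [card_image_of_injective _ hFinj, card_disjSum, card_disjSum, add_comm]
  have haU : a ∈ U := by
    obtain ⟨i, hi⟩ : ∃ i, a ∈ V i := by
      by_contra! h
      simp [familyDegree, h] at ha
      omega
    exact mem_biUnion.2 ⟨i, mem_univ _, hi⟩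
  -- A symbol of full degree is not joined to its own copy, so it is matched to a set `V x`.
  obtain ⟨x | b, -, hx⟩ := mem_image.1 (hsurj ▸ inl_mem_disjSum.2 haU)
  · exact ⟨x, Sum.inl_injective ((hfF x).symm.trans hx)⟩
  · have hb := hFT (.inr b)
    simp only [hx, doubledNeighbors, inl_mem_disjSum, mem_filter, mem_singleton] at hb
    exact absurd ha hb.2.ne

theorem familyDegree_erase_lt {V : ι → Finset α} {f : ι → α} (hfV : ∀ i, f i ∈ V i) {a : α}
    (ha : a ∈ Set.range f) : familyDegree (fun i => (V i).erase (f i)) a < familyDegree V a := by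
  classical
  obtain ⟨i₀, rfl⟩ := ha
  have hsub : ({i | f i₀ ∈ (V i).erase (f i)} : Finset ι) ⊆
      ({i | f i₀ ∈ V i} : Finset ι).erase i₀ := fun i hi => by
    obtain ⟨hne, hmem⟩ := mem_erase.1 (mem_filter.1 hi).2
    exact mem_erase.2 ⟨fun h => hne (h ▸ rfl), mem_filter.2 ⟨mem_univ _, hmem⟩⟩
  have hi₀ : i₀ ∈ ({i | f i₀ ∈ V i} : Finset ι) := mem_filter.2 ⟨mem_univ i₀, hfV i₀⟩
  have := card_le_card hsub
  rw [card_erase_of_mem hi₀] at this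
  have := card_pos.2 ⟨i₀, hi₀⟩
  simp only [familyDegree]
  omega

theorem familyDegree_erase_le (V : ι → Finset α) (f : ι → α) (a : α) :
    familyDegree (fun i => (V i).erase (f i)) a ≤ familyDegree V a :=
  card_le_card (monotone_filter_right _ fun _ _ h => mem_of_mem_erase h)

/-- König's edge-colouring theorem for bipartite graphs, as a filling: `V i` is laid out in
cells `1, ..., w` of row `i` with no symbol repeated in a column. -/
theorem exists_bijOn_Icc_injective_of_familyDegree_le [Nonempty α] (w : ℕ) (V : ι → Finset α)
    (hcard : ∀ i, #(V i) = w) (hdeg : ∀ a, familyDegree V a ≤ w) :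
    ∃ g : ι → ℕ → α, (∀ i, Set.BijOn (g i) (Set.Icc 1 w) (V i)) ∧
      ∀ j ∈ Set.Icc 1 w, Function.Injective (g · j) := by
  induction w generalizing V with
  | zero =>
    refine ⟨fun _ _ => Classical.arbitrary α, fun i => ?_,
      fun j hj => absurd (hj.1.trans hj.2) (by omega)⟩
    rw [card_eq_zero.1 (hcard i), coe_empty, Set.Icc_eq_empty (by omega)]
    exact Set.bijOn_empty _
  | succ w ih =>
    obtain ⟨f, hf, hfV, hcover⟩ := exists_injective_mem_of_familyDegree_le w.succ_pos hcard hdeg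
    obtain ⟨g, hgrow, hgcol⟩ := ih (fun i => (V i).erase (f i))
      (fun i => by rw [card_erase_of_mem (hfV i), hcard i, Nat.add_sub_cancel])
      (fun a => by
        rcases (hdeg a).lt_or_eq with hlt | heq
        · exact (familyDegree_erase_le V f a).trans (Nat.lt_succ_iff.1 hlt)
        · exact Nat.lt_succ_iff.1 (heq ▸ familyDegree_erase_lt hfV (hcover a heq) :
            _ < w + 1))
    refine ⟨fun i j => if j = w + 1 then f i else g i j, fun i => ?_, fun j hj => ?_⟩
    · have hIcc : Set.Icc 1 (w + 1) = insert (w + 1) (Set.Icc 1 w) := by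
        ext j; simp only [Set.mem_Icc, Set.mem_insert_iff]; omega
      have hV : (V i : Set α) = insert (f i) ((V i).erase (f i) : Set α) := by
        rw [coe_erase, Set.insert_sdiff_singleton, Set.insert_eq_of_mem (mem_coe.2 (hfV i))]
      have := ((hgrow i).congr (f₂ := fun j => if j = w + 1 then f i else g i j)
        fun j hj => (if_neg (by grind)).symm).insert (a := w + 1) (by simp)
      rwa [if_pos rfl, ← hV, ← hIcc] at this
    · by_cases hjw : j = w + 1
      · simpa only [hjw, if_true] using hf
      · simpa only [hjw, if_false] using hgcol j ⟨hj.1, by grind⟩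

theorem exists_finsets_familyDegree_eq (U : Finset α) (c : α → ℕ) (d : ℕ) {t : ℕ}
    (hc : ∀ a ∈ U, c a ≤ t) (hsum : ∑ a ∈ U, c a = t * d) :
    ∃ L : Fin t → Finset α, (∀ i, L i ⊆ U) ∧ (∀ i, #(L i) = d) ∧
      ∀ a ∈ U, familyDegree L a = c a := by
  induction t generalizing c with
  | zero => exact ⟨Fin.elim0, fun i => i.elim0, fun i => i.elim0, fun a ha => by
      simp [familyDegree, Nat.le_zero.1 (hc a ha)]⟩
  | succ t ih =>
    obtain ⟨S, hSU, hScard, hSpos, hfullS⟩ := exists_subset_card_eq_of_sum_eq t.succ_pos hc hsum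
    have hsplit : ∀ a ∈ U, c a - (if a ∈ S then 1 else 0) + (if a ∈ S then 1 else 0) = c a :=
      fun a _ => by
        split_ifs with h
        · exact Nat.sub_add_cancel (hSpos a h)
        · rfl
    obtain ⟨L, hLU, hLcard, hLdeg⟩ := ih (fun a => c a - if a ∈ S then 1 else 0)
      (fun a ha => by
        have := hc a ha
        by_cases h : a ∈ S
        · simp only [h, if_true]
          omega
        · have : c a ≠ t + 1 := fun heq => h (hfullS a ha heq)
          simp only [h, if_false]
          omega)
      (by
        have := sum_congr rfl hsplit
        rw [sum_add_distrib, sum_boole, Nat.cast_id, filter_mem_eq_inter, inter_eq_right.2 hSU,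
          hScard, hsum, add_mul, one_mul] at this
        omega)
    refine ⟨Fin.cons S L, Fin.cases hSU hLU, Fin.cases hScard hLcard, fun a ha => ?_⟩
    rw [familyDegree_eq_sum, Fin.sum_univ_succ, Fin.cons_zero]
    simp only [Fin.cons_succ, ← familyDegree_eq_sum, hLdeg a ha]
    rw [add_comm, hsplit a ha]

theorem familyDegree_sumElim {κ : Type*} [Fintype κ] (V : ι → Finset α) (W : κ → Finset α)
    (a : α) : familyDegree (Sum.elim V W) a = familyDegree V a + familyDegree W a := by
  simp only [familyDegree_eq_sum, Fintype.sum_sum_type, Sum.elim_inl, Sum.elim_inr]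
  rfl

theorem familyDegree_const (A : Finset α) (a : α) :
    familyDegree (fun _ : ι => A) a = if a ∈ A then Fintype.card ι else 0 := by
  split_ifs with h <;> simp [familyDegree, h]

theorem familyDegree_sdiff (U : Finset α) (V : ι → Finset α) {a : α} (ha : a ∈ U) :
    familyDegree (fun i => U \ V i) a = Fintype.card ι - familyDegree V a := by
  have := card_filter_add_card_filter_not (s := univ) (fun i => a ∈ V i)
  simp only [familyDegree, mem_sdiff, ha, true_and, card_univ] at this ⊢
  omega

theorem familyDegree_eq_zero {V : ι → Finset α} {a : α} (ha : ∀ i, a ∉ V i) :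
    familyDegree V a = 0 := by
  simp [familyDegree, ha]

end Family

theorem colSum_eq_mul_card {S : Multiset ℕ} {w : ℕ} (hS : ∀ x ∈ S, w ≤ x) :
    colSum S w = w * Multiset.card S := by
  rw [colSum, sum_congr rfl fun c hc => congrArg Multiset.card (Multiset.filter_eq_self.2
    fun x hx => (mem_Icc.1 hc).2.trans (hS x hx)), sum_const, Nat.card_Icc, smul_eq_mul,
    Nat.add_sub_cancel]

theorem exists_le_card_le_topSum_eq (S : Multiset ℕ) (w : ℕ) :
    ∃ M ≤ S, Multiset.card M ≤ w ∧ topSum S w = M.sum := by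
  refine ⟨((S.sort (· ≤ ·)).reverse.take w : List ℕ), ?_, by simp, by simp [topSum]⟩
  calc (((S.sort (· ≤ ·)).reverse.take w : List ℕ) : Multiset ℕ)
      ≤ ((S.sort (· ≤ ·)).reverse : List ℕ) := Multiset.coe_le.2 (List.take_sublist _ _).subperm
    _ = S := by rw [Multiset.coe_reverse, Multiset.sort_eq]

theorem sum_le_of_le_replicate_add_replicate {M : Multiset ℕ} {s t k d : ℕ}
    (hM : M ≤ Multiset.replicate s k + Multiset.replicate t (k + d)) :
    M.sum ≤ Multiset.card M * k + min (Multiset.card M) t * d := by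
  have hmem : ∀ x ∈ M, x = k ∨ x = k + d := fun x hx => by
    rcases Multiset.mem_add.1 (Multiset.mem_of_le hM hx) with h | h
    · exact .inl (Multiset.eq_of_mem_replicate h)
    · exact .inr (Multiset.eq_of_mem_replicate h)
  rcases Nat.eq_zero_or_pos d with rfl | hd
  · simpa using Multiset.sum_le_card_nsmul M k fun x hx => by rcases hmem x hx with h | h <;> omega
  have hsplit := Multiset.filter_add_not (· = k + d) M
  rw [Multiset.filter_eq'] at hsplit
  set c := Multiset.count (k + d) M
  have hct : c ≤ t := by
    simpa [Multiset.count_replicate, hd.ne'] using Multiset.count_le_of_le (k + d) hM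
  have hcM : c ≤ Multiset.card M := Multiset.count_le_card _ _
  have hrest : M.filter (fun x => ¬x = k + d) = Multiset.replicate (Multiset.card M - c) k := by
    refine Multiset.eq_replicate.2 ⟨?_, fun x hx => ?_⟩
    · have := congrArg Multiset.card hsplit
      rw [Multiset.card_add, Multiset.card_replicate] at this
      omega
    · obtain ⟨hxM, hx⟩ := Multiset.mem_filter.1 hx
      exact (hmem x hxM).resolve_right hx
  have hsum : M.sum = c * (k + d) + (Multiset.card M - c) * k := by
    conv_lhs => rw [← hsplit, Multiset.sum_add, hrest]
    simp
  rw [hsum]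
  calc c * (k + d) + (Multiset.card M - c) * k = Multiset.card M * k + c * d := by
        rw [Nat.sub_mul, mul_add]; have := Nat.mul_le_mul_right k hcM; omega
    _ ≤ Multiset.card M * k + min (Multiset.card M) t * d := by gcongr; exact le_min hcM hct

theorem topSum_replicate_add_replicate_le (s t k d w : ℕ) :
    topSum (Multiset.replicate s k + Multiset.replicate t (k + d)) w ≤ w * k + min w t * d := by
  obtain ⟨M, hM, hMw, hsum⟩ := exists_le_card_le_topSum_eq _ w
  rw [hsum]
  refine (sum_le_of_le_replicate_add_replicate hM).trans ?_
  gcongr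

theorem Wide.mul_add_le {R : Multiset ℕ} (hR : Wide R) {s t k d w : ℕ}
    (hsub : Multiset.replicate s k + Multiset.replicate t (k + d) ≤ R) (hw : 0 < w)
    (hwk : w ≤ k) : w * (s + t) ≤ w * k + min w t * d := by
  have hcol : colSum (Multiset.replicate s k + Multiset.replicate t (k + d)) w = w * (s + t) := by
    rw [colSum_eq_mul_card, Multiset.card_add, Multiset.card_replicate, Multiset.card_replicate]
    intro x hx
    rcases Multiset.mem_add.1 hx with h | h <;> rw [Multiset.eq_of_mem_replicate h] <;> omega
  exact hcol ▸ (hR _ hsub w hw).trans (topSum_replicate_add_replicate_le s t k d w)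

/-- `c v` is to be the number of long rows whose right block contains the symbol `v`; the
inequalities say that `v` then lies in at most `d` right-block sets and at most `k` left-block
sets. -/
theorem exists_rightBlock_counts {s t k d : ℕ} (hsk : s ≤ k) (hst : s + t ≤ k + d)
    (hwide : k * (s + t) ≤ k * k + min k t * d) :
    ∃ c : ℕ → ℕ, (∀ v ∈ Icc 1 (k + d), c v ≤ min d t ∧ t - c v + (if v ≤ k then s else 0) ≤ k) ∧
      ∑ v ∈ Icc 1 (k + d), c v = t * d := by
  have hlo : ∑ v ∈ Icc 1 (k + d), (if v ≤ k then s + t - k else t - k) =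
      k * (s + t - k) + d * (t - k) := by
    rw [sum_ite, sum_const, sum_const, smul_eq_mul, smul_eq_mul]
    have h₁ : {v ∈ Icc 1 (k + d) | v ≤ k} = Icc 1 k := by ext; simp; omega
    have h₂ : {v ∈ Icc 1 (k + d) | ¬v ≤ k} = Icc (k + 1) (k + d) := by ext; simp; omega
    rw [h₁, h₂, Nat.card_Icc, Nat.card_Icc, Nat.add_sub_cancel, Nat.add_sub_add_right,
      Nat.add_sub_cancel_left]
  have hlo_le : k * (s + t - k) + d * (t - k) ≤ t * d := by
    rcases le_total t k with h | h
    · rw [min_eq_right h] at hwide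
      rw [Nat.sub_eq_zero_of_le h, Nat.mul_sub]
      omega
    · rw [min_eq_left h] at hwide
      obtain ⟨u, rfl⟩ := Nat.exists_eq_add_of_le h
      rw [Nat.add_sub_cancel_left, show s + (k + u) - k = s + u by omega]
      nlinarith
  have hhi : t * d ≤ ∑ v ∈ Icc 1 (k + d), min d t := by
    rw [sum_const, Nat.card_Icc, smul_eq_mul, Nat.add_sub_cancel]
    rcases le_total d t with h | h
    · rw [min_eq_left h]
      exact Nat.mul_le_mul_right d (by omega)
    · rw [min_eq_right h, mul_comm (k + d)]
      exact Nat.mul_le_mul_left t (by omega)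
  obtain ⟨c, hc, hsum⟩ := exists_le_le_sum_eq (s := Icc 1 (k + d))
    (lo := fun v => if v ≤ k then s + t - k else t - k) (fun v _ => by split_ifs <;> omega)
    (hlo ▸ hlo_le) hhi
  refine ⟨c, fun v hv => ⟨(hc v hv).2, ?_⟩, hsum⟩
  have := (hc v hv).1
  split_ifs at * <;> omega

theorem bijOn_Icc_append {β : Type*} {f₁ f₂ : ℕ → β} {A B : Set β} {k d : ℕ}
    (h₁ : Set.BijOn f₁ (Set.Icc 1 k) A) (h₂ : Set.BijOn f₂ (Set.Icc 1 d) B)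
    (hAB : Disjoint A B) :
    Set.BijOn (fun j => if j ≤ k then f₁ j else f₂ (j - k)) (Set.Icc 1 (k + d)) (A ∪ B) := by
  have hshift : Set.BijOn (· - k) (Set.Icc (k + 1) (k + d)) (Set.Icc 1 d) :=
    ⟨fun j hj => by simp only [Set.mem_Icc] at *; omega,
      fun x hx y hy h => by simp only [Set.mem_Icc] at *; omega,
      fun y hy => ⟨y + k, by simp only [Set.mem_Icc] at *; omega, by simp⟩⟩
  have e₁ := h₁.congr (f₂ := fun j => if j ≤ k then f₁ j else f₂ (j - k))
    fun j hj => (if_pos hj.2).symm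
  have e₂ := (h₂.comp hshift).congr (f₂ := fun j => if j ≤ k then f₁ j else f₂ (j - k))
    fun j hj => (if_neg (by simp only [Set.mem_Icc] at hj; omega)).symm
  have hIcc : Set.Icc 1 (k + d) = Set.Icc 1 k ∪ Set.Icc (k + 1) (k + d) := by
    ext; simp only [Set.mem_Icc, Set.mem_union]; omega
  have hdisj : Disjoint (Set.Icc 1 k) (Set.Icc (k + 1) (k + d)) :=
    Set.disjoint_left.2 fun j h₁ h₂ => by simp only [Set.mem_Icc] at h₁ h₂; omega
  rw [hIcc]
  exact e₁.union e₂ ((Set.injOn_union hdisj).2 ⟨e₁.injOn, e₂.injOn,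
    fun x hx y hy => hAB.ne_of_mem (e₁.mapsTo hx) (e₂.mapsTo hy)⟩)

theorem isLatin_map_univ {ι : Type*} [Fintype ι] (l : ι → ℕ) (f : ι → ℕ → ℕ)
    (hrow : ∀ i, Set.BijOn (f i) (Set.Icc 1 (l i)) (Set.Icc 1 (l i)))
    (hcol : ∀ j, 1 ≤ j → ∀ i₁ i₂, j ≤ l i₁ → j ≤ l i₂ → f i₁ j = f i₂ j → i₁ = i₂) :
    IsLatin (univ.val.map l) := by
  classical
  cases isEmpty_or_nonempty ι
  · exact ⟨0, fun _ => 0, fun _ _ => 0, by simp, by simp, by simp⟩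
  obtain ⟨ρ, hρ⟩ := (Set.finite_Icc 1 (Fintype.card ι)).exists_bijOn_of_encard_eq
    (t := (Set.univ : Set ι)) (by
      rw [← coe_Icc, Set.encard_coe_eq_coe_finsetCard, Set.encard_univ, Nat.card_Icc]
      simp)
  refine ⟨Fintype.card ι, l ∘ ρ, f ∘ ρ, ?_, fun r _ => ⟨(hrow (ρ r)).injOn, ?_⟩,
    fun j hj r₁ hr₁ r₂ hr₂ h₁ h₂ heq => hρ.injOn (by simpa using hr₁) (by simpa using hr₂)
      (hcol j hj _ _ h₁ h₂ heq)⟩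
  · rw [← Multiset.map_map, ← image_val_of_injOn (by simpa using hρ.injOn)]
    congr
    rw [← coe_inj, coe_image, coe_Icc, hρ.image_eq, coe_univ]
  · rw [← coe_inj, coe_image, coe_Icc]
    exact (hrow (ρ r)).image_eq

theorem isLatin_of_two_block_filling {s t k d : ℕ} (L : Fin t → Finset ℕ)
    (hL : ∀ i, L i ⊆ Icc 1 (k + d)) (gL : Fin t → ℕ → ℕ)
    (hgLrow : ∀ i, Set.BijOn (gL i) (Set.Icc 1 d) (L i))
    (hgLcol : ∀ j ∈ Set.Icc 1 d, Function.Injective (gL · j)) (gE : Fin t ⊕ Fin s → ℕ → ℕ)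
    (hgElong : ∀ i, Set.BijOn (gE (.inl i)) (Set.Icc 1 k) ↑(Icc 1 (k + d) \ L i))
    (hgEshort : ∀ i, Set.BijOn (gE (.inr i)) (Set.Icc 1 k) (Set.Icc 1 k))
    (hgEcol : ∀ j ∈ Set.Icc 1 k, Function.Injective (gE · j)) :
    IsLatin (Multiset.replicate s k + Multiset.replicate t (k + d)) := by
  let l : Fin t ⊕ Fin s → ℕ := Sum.elim (fun _ => k + d) (fun _ => k)
  let f : Fin t ⊕ Fin s → ℕ → ℕ :=
    Sum.elim (fun i j => if j ≤ k then gE (.inl i) j else gL i (j - k)) (fun i => gE (.inr i))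
  have hf : ∀ x j, j ≤ k → f x j = gE x j := by
    rintro (i | i) j hj
    · exact if_pos hj
    · rfl
  have hl : ∀ x j, k < j → j ≤ l x → ∃ i, x = .inl i := by
    rintro (i | i) j hkj hj
    · exact ⟨i, rfl⟩
    · exact absurd hj (by simp only [l, Sum.elim_inr]; omega)
  convert isLatin_map_univ l f ?_ ?_ using 1
  · rw [← univ_disjSum_univ, val_disjSum, Multiset.map_disjSum]
    simp [l, add_comm]
  · rintro (i | i)
    · have h := bijOn_Icc_append (hgElong i) (hgLrow i)
        (by rw [coe_sdiff]; exact Set.disjoint_sdiff_left)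
      rwa [coe_sdiff, Set.sdiff_union_of_subset (coe_subset.2 (hL i)), coe_Icc] at h
    · exact hgEshort i
  · intro j hj x₁ x₂ h₁ h₂ heq
    by_cases hjk : j ≤ k
    · rw [hf x₁ j hjk, hf x₂ j hjk] at heq
      exact hgEcol j ⟨hj, hjk⟩ heq
    · obtain ⟨i₁, rfl⟩ := hl x₁ j (by omega) h₁
      obtain ⟨i₂, rfl⟩ := hl x₂ j (by omega) h₂
      have heq' : gL i₁ (j - k) = gL i₂ (j - k) := by simpa [f, hjk] using heq
      have hjd : j - k ≤ d := by simp only [l, Sum.elim_inl] at h₁; omega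
      exact congrArg Sum.inl (hgLcol (j - k) ⟨by omega, hjd⟩ heq')

theorem isLatin_of_rightBlock_sets {s t k d : ℕ} (L : Fin t → Finset ℕ)
    (hLU : ∀ i, L i ⊆ Icc 1 (k + d)) (hLcard : ∀ i, #(L i) = d)
    (hLdeg : ∀ v ∈ Icc 1 (k + d), familyDegree L v ≤ d ∧
      t - familyDegree L v + (if v ≤ k then s else 0) ≤ k) :
    IsLatin (Multiset.replicate s k + Multiset.replicate t (k + d)) := by
  obtain ⟨gL, hgLrow, hgLcol⟩ := exists_bijOn_Icc_injective_of_familyDegree_le d L hLcard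
    fun v => by
      by_cases hv : v ∈ Icc 1 (k + d)
      · exact (hLdeg v hv).1
      · simp [familyDegree_eq_zero fun i h => hv (hLU i h)]
  obtain ⟨gE, hgErow, hgEcol⟩ := exists_bijOn_Icc_injective_of_familyDegree_le k
    (Sum.elim (fun i => Icc 1 (k + d) \ L i) fun _ : Fin s => Icc 1 k)
    (by
      rintro (i | i)
      · rw [Sum.elim_inl, card_sdiff_of_subset (hLU i), hLcard, Nat.card_Icc]
        omega
      · simp)
    fun v => by
      rw [familyDegree_sumElim, familyDegree_const, Fintype.card_fin]
      by_cases hv : v ∈ Icc 1 (k + d)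
      · rw [familyDegree_sdiff _ _ hv, Fintype.card_fin]
        have := (hLdeg v hv).2
        simp only [mem_Icc] at hv ⊢
        split_ifs at * <;> omega
      · rw [familyDegree_eq_zero fun i h => hv (mem_sdiff.1 h).1,
          if_neg fun h => hv (Icc_subset_Icc_right (by omega) h)]
        omega
  exact isLatin_of_two_block_filling L hLU gL hgLrow hgLcol gE (fun i => hgErow (.inl i))
    (fun i => by simpa using hgErow (.inr i)) hgEcol

theorem isLatin_replicate_add_replicate {s t k d : ℕ} (hk : 0 < k)
    (hw : Wide (Multiset.replicate s k + Multiset.replicate t (k + d))) :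
    IsLatin (Multiset.replicate s k + Multiset.replicate t (k + d)) := by
  have hsk : s ≤ k := by
    simpa using hw.mul_add_le (t := 0) (d := d) (by simp) one_pos hk
  have hst : s + t ≤ k + d := by
    have := hw.mul_add_le le_rfl one_pos hk
    rw [one_mul, one_mul] at this
    exact this.trans (by
      gcongr
      exact (Nat.mul_le_mul_right d (min_le_left 1 t)).trans (one_mul d).le)
  obtain ⟨c, hc, hcsum⟩ := exists_rightBlock_counts hsk hst (hw.mul_add_le le_rfl hk le_rfl)
  obtain ⟨L, hLU, hLcard, hLdeg⟩ := exists_finsets_familyDegree_eq (Icc 1 (k + d)) c d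
    (fun v hv => (hc v hv).1.trans (min_le_right _ _)) hcsum
  exact isLatin_of_rightBlock_sets L hLU hLcard fun v hv =>
    hLdeg v hv ▸ ⟨(hc v hv).1.trans (min_le_left _ _), (hc v hv).2⟩

theorem wide_implies_latin_two_general (a e : ℕ → ℕ)
    (ha1 : 0 < a 1) (ha12 : a 1 < a 2)
    (hw : Wide (rowMultiset 2 a e)) :
    IsLatin (rowMultiset 2 a e) := by
  obtain ⟨d, hd⟩ := Nat.exists_eq_add_of_le ha12.le
  have hR : rowMultiset 2 a e =
      Multiset.replicate (e 1) (a 1) + Multiset.replicate (e 2) (a 1 + d) := by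
    rw [rowMultiset, ← hd, show Icc 1 2 = {1, 2} from rfl, sum_pair (by norm_num)]
  rw [hR] at hw ⊢
  exact isLatin_replicate_add_replicate ha1 hw

/-- a wide Young diagram with two distinct row lengths is Latin. -/
theorem wide_implies_latin_two (a e : ℕ → ℕ)
    (ha1 : 0 < a 1) (ha12 : a 1 < a 2)
    (he : ∀ i, 1 ≤ i → i ≤ 2 → 0 < e i)
    (hw : Wide (rowMultiset 2 a e)) :
    IsLatin (rowMultiset 2 a e) :=
  wide_implies_latin_two_general a e ha1 ha12 hw
end
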